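/- Assume ε ∈ {1,−1}, ξ ≠ 0, and let λ* ∈ ℝ satisfy λ*·z(λ*)² + 4z(λ*) − λ*/(6εξ) = 0 and 1 − 6εξ·z(λ*)² ≥ 0; set y* = √(1 − 6εξ·z(λ*)²). Then F(0, y*, λ*) = (0,0,0), and if moreover D(λ*) ≠ 0 then w_eff(0, y*, λ*) = −1; i.e. the point 5 is an equilibrium representing accelerated (de Sitter-like) expansion. -/
import Mathlib


open Polynomial Filter

/-- The factor `D(λ) = 1 − 6εξ(1−6ξ)z(λ)²` coming from the time reparametrization. -/
noncomputable def Dfun (ε ξ : ℝ) (z : ℝ → ℝ) (l : ℝ) : ℝ :=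
  1 - 6*ε*ξ*(1-6*ξ)*(z l)^2

/-- The common bracket
`B(x,y,λ) = −4/3 − 2ξλy²z(λ) + ε(1−6ξ)(1−w_m)x² + 2εξ(1−3w_m)(x+z(λ))² + (1+w_m)(1−y²)`. -/
noncomputable def Bfun (ε ξ wm : ℝ) (z : ℝ → ℝ) (x y l : ℝ) : ℝ :=
  -4/3 - 2*ξ*l*y^2*(z l) + ε*(1-6*ξ)*(1-wm)*x^2
    + 2*ε*ξ*(1-3*wm)*(x + z l)^2 + (1+wm)*(1-y^2)

/-- First component of the vector field:
`f₁ = −(x − (ε/2)λy²)·D(λ) + (3/2)(x + 6ξz(λ))·B(x,y,λ)`. -/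
noncomputable def f1 (ε ξ wm : ℝ) (z : ℝ → ℝ) (x y l : ℝ) : ℝ :=
  -(x - ε/2*l*y^2) * Dfun ε ξ z l + 3/2*(x + 6*ξ*(z l)) * Bfun ε ξ wm z x y l

/-- Second component: `f₂ = y(2 − (1/2)λx)·D(λ) + (3/2)y·B(x,y,λ)`. -/
noncomputable def f2 (ε ξ wm : ℝ) (z : ℝ → ℝ) (x y l : ℝ) : ℝ :=
  y*(2 - 1/2*l*x) * Dfun ε ξ z l + 3/2*y * Bfun ε ξ wm z x y l

/-- Third component: `f₃ = x·D(λ)/z′(λ)`. -/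
noncomputable def f3 (ε ξ : ℝ) (z : ℝ → ℝ) (x y l : ℝ) : ℝ :=
  x * Dfun ε ξ z l / deriv z l

/-- The full vector field `F(x,y,λ) = (f₁,f₂,f₃)` of the reduced cosmological system. -/
noncomputable def Fvec (ε ξ wm : ℝ) (z : ℝ → ℝ) (x y l : ℝ) : ℝ × ℝ × ℝ :=
  (f1 ε ξ wm z x y l, f2 ε ξ wm z x y l, f3 ε ξ z x y l)

/-- The effective equation-of-state parameter `w_eff(x,y,λ)`. -/
noncomputable def weff (ε ξ wm : ℝ) (z : ℝ → ℝ) (x y l : ℝ) : ℝ :=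
  (Dfun ε ξ z l)⁻¹ *
    (-1 + ε*(1-6*ξ)*(1-wm)*x^2 + 2*ε*ξ*(1-3*wm)*(x + z l)^2
      + (1+wm)*(1-y^2) - 2*ε*ξ*(1-6*ξ)*(z l)^2 - 2*ξ*l*y^2*(z l))

/-- The Jacobian matrix `J_{ij} = ∂f_i/∂(j-th variable)` of `F` at the point `(x,y,λ)`. -/
noncomputable def Jmat (ε ξ wm : ℝ) (z : ℝ → ℝ) (x y l : ℝ) :
    Matrix (Fin 3) (Fin 3) ℝ :=
  Matrix.of
    ![![deriv (fun t => f1 ε ξ wm z t y l) x,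
        deriv (fun t => f1 ε ξ wm z x t l) y,
        deriv (fun t => f1 ε ξ wm z x y t) l],
      ![deriv (fun t => f2 ε ξ wm z t y l) x,
        deriv (fun t => f2 ε ξ wm z x t l) y,
        deriv (fun t => f2 ε ξ wm z x y t) l],
      ![deriv (fun t => f3 ε ξ z t y l) x,
        deriv (fun t => f3 ε ξ z x t l) y,
        deriv (fun t => f3 ε ξ z x y t) l]]

/-- The point 5, `x* = 0`, `y* = √(1 − 6εξz(λ*)²)`, where `λ*` solves
`λz(λ)² + 4z(λ) − λ/(6εξ) = 0`, is an equilibrium of the system, and if `D(λ*) ≠ 0`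
then `w_eff = −1` (accelerated, de Sitter-like expansion). -/
theorem deSitter_point_is_equilibrium (ε ξ wm : ℝ) (z : ℝ → ℝ) (lstar : ℝ)
    (hε : ε = 1 ∨ ε = -1) (hξ0 : ξ ≠ 0)
    (hz : DifferentiableAt ℝ z lstar) (hz' : deriv z lstar ≠ 0)
    (hl : lstar*(z lstar)^2 + 4*(z lstar) - lstar/(6*ε*ξ) = 0)
    (hpos : 0 ≤ 1 - 6*ε*ξ*(z lstar)^2) :
    Fvec ε ξ wm z 0 (Real.sqrt (1 - 6*ε*ξ*(z lstar)^2)) lstar = (0, 0, 0) ∧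
    (Dfun ε ξ z lstar ≠ 0 →
      weff ε ξ wm z 0 (Real.sqrt (1 - 6*ε*ξ*(z lstar)^2)) lstar = -1) := by

  have hε0 : ε ≠ 0 := by rcases hε with h | h <;> simp [h]
  have he2 : ε^2 = 1 := by rcases hε with h | h <;> simp [h] <;> norm_num
  set s := z lstar with hs
  set y := Real.sqrt (1 - 6*ε*ξ*s^2) with hy
  have hy2 : y^2 = 1 - 6*ε*ξ*s^2 := Real.sq_sqrt hpos
  -- constraint: λ·y² = 24εξs
  have hly : lstar * (1 - 6*ε*ξ*s^2) = 24*ε*ξ*s := by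
    have h6 : (6:ℝ)*ε*ξ ≠ 0 := by positivity
    field_simp at hl
    linarith [hl]
  refine ⟨?_, ?_⟩
  · have hf3 : f3 ε ξ z 0 y lstar = 0 := by simp [f3]
    have hkey : 4 * Dfun ε ξ z lstar + 3 * Bfun ε ξ wm z 0 y lstar = 0 := by
      simp only [Dfun, Bfun, ← hs]
      linear_combination (-(3:ℝ) - 3*wm - 6*ξ*s*lstar) * hy2 + (-6*ξ*s) * hly
    have hf1 : f1 ε ξ wm z 0 y lstar = 0 := by
      simp only [f1, ← hs]
      have hB : Bfun ε ξ wm z 0 y lstar = -(4/3) * Dfun ε ξ z lstar := by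
        linarith [hkey]
      rw [hB]
      simp only [Dfun, ← hs]
      linear_combination (ε/2 * lstar * (1 - 6*ε*ξ*(1-6*ξ)*s^2)) * hy2
        + (ε/2 * (1 - 6*ε*ξ*(1-6*ξ)*s^2)) * hly
        + (12*ξ*s*(1 - 6*ε*ξ*(1-6*ξ)*s^2)) * he2
    have hf2 : f2 ε ξ wm z 0 y lstar = 0 := by
      simp only [f2]
      have hB : Bfun ε ξ wm z 0 y lstar = -(4/3) * Dfun ε ξ z lstar := by
        linarith [hkey]
      rw [hB]; ring
    simp [Fvec, hf1, hf2, hf3]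
  · intro hD
    simp only [weff, ← hs]
    rw [inv_mul_eq_div, div_eq_iff hD]
    simp only [Dfun, ← hs]
    linear_combination (-(1:ℝ) - wm - 2*ξ*lstar*s) * hy2 + (-2*ξ*s) * hly
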